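/- arXiv:math/0008218 — 2 statements merged into one kernel-verified Lean document; each statement's English description precedes it below -/
import Mathlib

section
/- Let Y₁ and Y₂ be compact length spaces with Y₂ semi-locally simply connected. If d_GH(Y₁, Y₂) ≤ r(Y₂)/20, then there exists a surjective group homomorphism Φ : π₁(Y₁) → π₁(Y₂). -/
open Metric Filter Topology Set

noncomputable section

attribute [local instance] Path.Homotopic.setoid

/-! ### Basic metric-geometric notions -/

/-- The length of a path in a metric space: the total variation of the path. -/
def Path.elength {X : Type} [MetricSpace X] {x y : X} (γ : Path x y) : ENNReal :=
  eVariationOn (fun t : ℝ => γ.extend t) (Set.Icc (0 : ℝ) 1)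

/-- A metric space is a length space if the distance between any two points is the
infimum of the lengths of paths joining them. -/
def IsLengthSpace (X : Type) [MetricSpace X] : Prop :=
  ∀ x y : X, edist x y = ⨅ γ : Path x y, γ.elength

/-- A bundled compact nonempty metric space. -/
structure CptMS where
  X : Type
  [m : MetricSpace X]
  [cpt : CompactSpace X]
  [nem : Nonempty X]

attribute [instance] CptMS.m CptMS.cpt CptMS.nem

/-- A bundled pointed metric space. -/
structure PtdMS where
  X : Type
  [m : MetricSpace X]
  pt : X

attribute [instance] PtdMS.m

/-- Pointed Gromov-Hausdorff convergence of a sequence of pointed metric spaces `A i`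
to the pointed metric space `B`, expressed via pointed ε-approximations on balls of
every radius `R` about the basepoints. -/
def PtdGHLimit (A : ℕ → PtdMS) (B : PtdMS) : Prop :=
  ∀ R > (0 : ℝ), ∀ ε > (0 : ℝ), ∃ N : ℕ, ∀ i ≥ N, ∃ f : (A i).X → B.X,
    f (A i).pt = B.pt ∧
    (∀ a b : (A i).X, dist a (A i).pt ≤ R → dist b (A i).pt ≤ R →
      |dist (f a) (f b) - dist a b| ≤ ε) ∧
    (∀ z : B.X, dist z B.pt ≤ R → ∃ a : (A i).X, dist a (A i).pt ≤ R ∧ dist z (f a) ≤ ε)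

/-! ### Covering spaces, deck transformations and universal covers -/

/-- The deck transformation group of a map `π : E → X`: the group of self-homeomorphisms
of `E` commuting with `π`, as a subgroup of the permutation group of `E`. -/
def Deck {E X : Type} [TopologicalSpace E] [TopologicalSpace X] (π : E → X) :
    Subgroup (Equiv.Perm E) where
  carrier := {h | Continuous h ∧ Continuous h.symm ∧ ∀ e, π (h e) = π e}
  one_mem' := ⟨continuous_id, continuous_id, fun _ => rfl⟩
  mul_mem' := by
    rintro f g ⟨hf1, hf2, hf3⟩ ⟨hg1, hg2, hg3⟩
    exact ⟨hf1.comp hg1, hg2.comp hf2, fun e => (hf3 (g e)).trans (hg3 e)⟩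
  inv_mem' := by
    rintro f ⟨hf1, hf2, hf3⟩
    refine ⟨hf2, hf1, fun e => ?_⟩
    conv_rhs => rw [show e = f (f⁻¹ e) from (Equiv.apply_symm_apply f e).symm]
    rw [hf3]

/-- `π : E → X` is a universal cover: `E` is connected, `π` is a covering map, and
every covering map onto `X` is factored through by `π` (via a continuous map commuting
with the projections). -/
structure IsUniversalCover {E X : Type} [TopologicalSpace E] [TopologicalSpace X]
    (π : E → X) : Prop where
  covering : IsCoveringMap π
  conn : ConnectedSpace E
  lifts : ∀ (E' : Type) (_ : TopologicalSpace E') (π' : E' → X), IsCoveringMap π' →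
    ∃ f : E → E', Continuous f ∧ π' ∘ f = π

/-- A bundled (topological) covering candidate over `X`: a space with a map to `X`. -/
structure Cover (X : Type) [TopologicalSpace X] where
  E : Type
  [tE : TopologicalSpace E]
  π : E → X

attribute [instance] Cover.tE

/-- The universal cover of `X` exists. -/
def UniversalCoverExists (X : Type) [TopologicalSpace X] : Prop :=
  ∃ c : Cover X, IsUniversalCover c.π

/-- A bundled metric covering candidate over the metric space `X`. -/
structure MCov (X : Type) [MetricSpace X] where
  E : Type
  [m : MetricSpace E]
  π : E → X

attribute [instance] MCov.m

/-! ### Fundamental group notions -/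

/-- The homotopy class of a loop, as an element of the fundamental group. -/
def loopClass {Y : Type} [TopologicalSpace Y] {y : Y} (γ : Path y y) :
    FundamentalGroup Y y :=
  FundamentalGroup.fromPath (X := TopCat.of Y) ⟦γ⟧

/-- `Y` is semi-locally simply connected: every point has a neighborhood `U` such that
every loop lying in `U` is null-homotopic in `Y`. -/
def SemiLocallySimplyConnected (Y : Type) [TopologicalSpace Y] : Prop :=
  ∀ y : Y, ∃ U : Set Y, IsOpen U ∧ y ∈ U ∧
    ∀ (z : Y) (γ : Path z z), (∀ t, γ t ∈ U) → loopClass γ = 1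

/-- The Spanier subgroup `π₁(Y, δ, p)` of the fundamental group associated to the open
cover of `Y` by all open `δ`-balls: the normal subgroup generated by the classes of
loops of the form `α⁻¹ ∘ β ∘ α`, where `β` is a loop lying in some open ball of radius
`δ` and `α` is a path from `p` to `β 0`. -/
def piDelta (Y : Type) [MetricSpace Y] (δ : ℝ) (p : Y) : Subgroup (FundamentalGroup Y p) :=
  Subgroup.normalClosure
    {g | ∃ (q c : Y) (β : Path q q) (α : Path p q),
      (∀ t, β t ∈ Metric.ball c δ) ∧ g = loopClass ((α.trans β).trans α.symm)}

instance piDelta_normal (Y : Type) [MetricSpace Y] (δ : ℝ) (p : Y) :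
    (piDelta Y δ p).Normal :=
  Subgroup.normalClosure_normal

/-- The group `G(Y, δ) = π₁(Y, p) / π₁(Y, δ, p)`, the deck transformation group of the
`δ`-cover `Ỹ^δ` of `Y`. -/
def GDelta (Y : Type) [MetricSpace Y] (δ : ℝ) (p : Y) : Type :=
  FundamentalGroup Y p ⧸ piDelta Y δ p

instance (Y : Type) [MetricSpace Y] (δ : ℝ) (p : Y) : Group (GDelta Y δ p) :=
  QuotientGroup.Quotient.group _

/-- `π : E → Y` is (isometrically equivalent to) the `δ`-cover `Ỹ^δ` of `Y`, equipped
with the lifted length metric: `π` is a covering map from a connected length space,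
it is distance nonincreasing and a local isometry, and a loop in `Y` lifts to a closed
loop in `E` exactly when its homotopy class lies in the Spanier subgroup `π₁(Y, δ, p)`. -/
structure IsDeltaCover {E Y : Type} [MetricSpace E] [MetricSpace Y] (π : E → Y)
    (δ : ℝ) : Prop where
  covering : IsCoveringMap π
  surj : Function.Surjective π
  conn : ConnectedSpace E
  length : IsLengthSpace E
  nonexpanding : ∀ a b : E, dist (π a) (π b) ≤ dist a b
  localIsometry : ∀ e : E, ∃ ε > 0, ∀ a ∈ Metric.ball e ε, ∀ b ∈ Metric.ball e ε,
    dist (π a) (π b) = dist a b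
  lifted_loops : ∀ (p : Y) (γ : Path p p) (e : E) (γ' : C(unitInterval, E)),
    π e = p → (∀ t, π (γ' t) = γ t) → γ' 0 = e →
      (γ' 1 = e ↔ loopClass γ ∈ piDelta Y δ p)

/-- The deck transformation `h` of a cover `π : E → Y` represents the element `g` of the
fundamental group `π₁(Y, p)` (relative to some lift of the basepoint): some loop `γ`
representing `g` lifts to a path from a point `e` in the fiber over `p` to `h e`. -/
def RepresentsDeck {E Y : Type} [MetricSpace E] [MetricSpace Y] (π : E → Y) {p : Y}
    (g : FundamentalGroup Y p) (h : Equiv.Perm E) : Prop :=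
  h ∈ Deck π ∧ ∃ (γ : Path p p) (e : E) (γ' : C(unitInterval, E)),
    loopClass γ = g ∧ π e = p ∧ (∀ t, π (γ' t) = γ t) ∧ γ' 0 = e ∧ γ' 1 = h e

/-!
Gromov–Hausdorff closeness yields maps `f : Y₁ → Y₂` and `g : Y₂ → Y₁` that distort distances
by at most `ε = r / 10` and are `ε`-inverse to each other. Although `f` is not continuous, it
pushes a path `γ` of `Y₁` to a class in the fundamental groupoid of `Y₂`: sample `γ` finely,
apply `f` to the samples and join consecutive images by almost minimizing paths. Any two such
discrete paths coming from different samplings, or from homotopic paths, differ by loops lying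
in balls of radius `r`, which are null-homotopic; so this is a functor of fundamental groupoids,
and it restricts to a homomorphism `π₁(Y₁, p₁) → π₁(Y₂, f p₁)`. It is onto: a loop `η` in `Y₂`
is homotopic to the chain through its samples `η (i / n)`, this chain is close to the chain
through `f (g (η (i / n)))`, and the latter is the image of the path of `Y₁` that joins the
points `g (η (i / n))` by almost minimizing paths. Changing the basepoint along a path from
`f p₁` to `p₂` finishes the proof.
-/

open CategoryTheory

section LengthSpace

variable {X : Type} [MetricSpace X]

theorem IsLengthSpace.exists_path_dist_le (hX : IsLengthSpace X) (x y : X) {σ : ℝ} (hσ : 0 < σ) :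
    ∃ γ : Path x y, ∀ t, dist x (γ t) ≤ dist x y + σ := by
  have hlt : ⨅ γ : Path x y, γ.elength < edist x y + ENNReal.ofReal σ := by
    rw [← hX x y]
    exact ENNReal.lt_add_right (edist_ne_top x y) (by simpa using hσ)
  obtain ⟨γ, hγ⟩ := iInf_lt_iff.mp hlt
  refine ⟨γ, fun t => ?_⟩
  have hvar : edist x (γ t) ≤ γ.elength := by
    simpa [Path.elength, Path.extend_extends' γ t] using
      eVariationOn.edist_le (fun s : ℝ => γ.extend s) (s := Icc 0 1)
        (⟨le_rfl, zero_le_one⟩ : (0 : ℝ) ∈ Icc 0 1) t.2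
  have h := hvar.trans hγ.le
  rwa [edist_dist, edist_dist, ← ENNReal.ofReal_add dist_nonneg hσ.le,
    ENNReal.ofReal_le_ofReal_iff (by positivity)] at h

theorem IsLengthSpace.pathConnectedSpace (hX : IsLengthSpace X) [Nonempty X] :
    PathConnectedSpace X :=
  ⟨‹_›, fun x y => ⟨(hX.exists_path_dist_le x y one_pos).choose⟩⟩

end LengthSpace

theorem UniformContinuous.exists_nat_dist_le {A B : Type*} [PseudoMetricSpace A]
    [PseudoMetricSpace B] {φ : A → B} (hφ : UniformContinuous φ) {θ : ℝ} (hθ : 0 < θ) :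
    ∃ n : ℕ, n ≠ 0 ∧ ∀ p q, dist p q ≤ 1 / n → dist (φ p) (φ q) ≤ θ := by
  obtain ⟨δ, hδ, hφδ⟩ := Metric.uniformContinuous_iff.mp hφ θ hθ
  obtain ⟨n, hn⟩ := exists_nat_one_div_lt hδ
  refine ⟨n + 1, n.succ_ne_zero, fun p q hpq => (hφδ (hpq.trans_lt ?_)).le⟩
  exact_mod_cast hn

section Groupoid

variable {Y : Type} [TopologicalSpace Y]

abbrev Path.toHom {x y : Y} (γ : Path x y) :
    FundamentalGroupoid.mk x ⟶ FundamentalGroupoid.mk y :=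
  ⟦γ⟧

theorem Path.toHom_trans {x y z : Y} (γ : Path x y) (γ' : Path y z) :
    (γ.trans γ').toHom = γ.toHom ≫ γ'.toHom :=
  rfl

theorem Path.toHom_eq_of_loopClass_eq_one {x y : Y} (γ γ' : Path x y)
    (h : loopClass (γ.trans γ'.symm) = 1) : γ.toHom = γ'.toHom := by
  rw [← CategoryTheory.comp_inv_eq_id, ← Groupoid.inv_eq_inv]
  exact h

end Groupoid

def BallLoopsNullhomotopic (Y : Type) [MetricSpace Y] (r : ℝ) : Prop :=
  ∀ (c z : Y) (γ : Path z z), (∀ t, γ t ∈ ball c r) → loopClass γ = 1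

theorem Path.toHom_eq_of_forall_mem_ball {Y : Type} [MetricSpace Y] {r : ℝ}
    (hr : BallLoopsNullhomotopic Y r) {x y c : Y} {γ γ' : Path x y}
    (hγ : ∀ t, γ t ∈ ball c r) (hγ' : ∀ t, γ' t ∈ ball c r) : γ.toHom = γ'.toHom := by
  refine Path.toHom_eq_of_loopClass_eq_one γ γ' (hr c x _ fun t => ?_)
  rw [Path.trans_apply]
  split_ifs
  exacts [hγ _, hγ' _]

section Chains

variable {Y : Type} [MetricSpace Y] (hY : IsLengthSpace Y) {σ : ℝ} (hσ : 0 < σ)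

def shortPath (x y : Y) : Path x y :=
  (hY.exists_path_dist_le x y hσ).choose

theorem dist_shortPath_le (x y : Y) (t : unitInterval) :
    dist x (shortPath hY hσ x y t) ≤ dist x y + σ :=
  (hY.exists_path_dist_le x y hσ).choose_spec t

theorem shortPath_mem_ball {x y c : Y} {r : ℝ} (h : dist c x + dist x y + σ < r)
    (t : unitInterval) : shortPath hY hσ x y t ∈ ball c r := by
  rw [mem_ball, dist_comm]
  linarith [dist_triangle c x (shortPath hY hσ x y t), dist_shortPath_le hY hσ x y t]

def shortHom (x y : Y) : FundamentalGroupoid.mk x ⟶ FundamentalGroupoid.mk y :=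
  (shortPath hY hσ x y).toHom

variable {r : ℝ}

theorem shortHom_self (hr : BallLoopsNullhomotopic Y r) (hσr : σ < r) (x : Y) :
    shortHom hY hσ x x = 𝟙 _ :=
  Path.toHom_eq_of_forall_mem_ball hr (c := x)
    (shortPath_mem_ball hY hσ (by simpa using hσr))
    (fun _ => mem_ball_self (hσ.trans hσr))

theorem shortHom_comp_shortHom (hr : BallLoopsNullhomotopic Y r) {x y z : Y}
    (h : dist x y + dist y z + σ < r) :
    shortHom hY hσ x y ≫ shortHom hY hσ y z = shortHom hY hσ x z := by
  refine Path.toHom_eq_of_forall_mem_ball hr (c := x) (fun t => ?_)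
    (shortPath_mem_ball hY hσ (by linarith [dist_self x, dist_triangle x y z]))
  rw [Path.trans_apply]
  split_ifs
  · exact shortPath_mem_ball hY hσ (by linarith [dist_self x, dist_nonneg (x := y) (y := z)]) _
  · exact shortPath_mem_ball hY hσ h _

def chainHom (x : ℕ → Y) : (n : ℕ) → (FundamentalGroupoid.mk (x 0) ⟶ FundamentalGroupoid.mk (x n))
  | 0 => 𝟙 _
  | n + 1 => chainHom x n ≫ shortHom hY hσ (x n) (x (n + 1))

theorem chainHom_add (x : ℕ → Y) (n k : ℕ) :
    chainHom hY hσ x (n + k) = chainHom hY hσ x n ≫ chainHom hY hσ (fun i => x (n + i)) k := by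
  induction k with
  | zero => exact (Category.comp_id _).symm
  | succ k ih =>
    change chainHom hY hσ x (n + k) ≫ _ = _
    rw [ih, Category.assoc]
    rfl

variable {δ : ℝ}

theorem chainHom_eq_shortHom (hr : BallLoopsNullhomotopic Y r) (hδ : 2 * δ + σ < r)
    {x : ℕ → Y} {n : ℕ} (hstep : ∀ i < n, dist (x i) (x (i + 1)) ≤ δ)
    (hball : ∀ i ≤ n, dist (x 0) (x i) ≤ δ) :
    chainHom hY hσ x n = shortHom hY hσ (x 0) (x n) := by
  induction n with
  | zero => exact (shortHom_self hY hσ hr (by linarith [dist_nonneg.trans (hball 0 le_rfl)]) _).symm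
  | succ n ih =>
    rw [chainHom, ih (fun i hi => hstep i (by omega)) (fun i hi => hball i (by omega)),
      shortHom_comp_shortHom hY hσ hr]
    linarith [hball n (by omega), hstep n (by omega)]

theorem chainHom_mul (hr : BallLoopsNullhomotopic Y r) (hδ : 2 * δ + σ < r)
    {x : ℕ → Y} {m n : ℕ} (hstep : ∀ i < m * n, dist (x i) (x (i + 1)) ≤ δ)
    (hblock : ∀ i < n, ∀ j ≤ m, dist (x (m * i)) (x (m * i + j)) ≤ δ) :
    chainHom hY hσ x (m * n) = chainHom hY hσ (fun i => x (m * i)) n := by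
  induction n with
  | zero => rfl
  | succ n ih =>
    have hmn : m * (n + 1) = m * n + m := Nat.mul_succ m n
    change chainHom hY hσ x (m * n + m) = _
    rw [chainHom_add, ih (fun i hi => hstep i (by omega)) (fun i hi => hblock i (by omega)),
      chainHom_eq_shortHom hY hσ hr hδ (x := fun i => x (m * n + i))
        (fun i hi => hstep _ (by omega)) (fun j hj => hblock n (by omega) j hj)]
    rfl

/-- Each square `[xᵢ, xᵢ₊₁] ≫ [xᵢ₊₁, yᵢ₊₁] = [xᵢ, yᵢ] ≫ [yᵢ, yᵢ₊₁]` of the ladder, where `[u, v]` is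
`shortHom u v`, lies in a ball of radius `r` about `xᵢ`. -/
theorem chainHom_comp_shortHom (hr : BallLoopsNullhomotopic Y r) (hδ : 2 * δ + σ < r)
    {x y : ℕ → Y} {n : ℕ} (hx : ∀ i < n, dist (x i) (x (i + 1)) ≤ δ)
    (hy : ∀ i < n, dist (y i) (y (i + 1)) ≤ δ) (hxy : ∀ i ≤ n, dist (x i) (y i) ≤ δ) :
    chainHom hY hσ x n ≫ shortHom hY hσ (x n) (y n) =
      shortHom hY hσ (x 0) (y 0) ≫ chainHom hY hσ y n := by
  induction n with
  | zero => simp [chainHom]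
  | succ n ih =>
    have hxn := hx n (by omega)
    have hyn := hy n (by omega)
    have hxyn := hxy n (by omega)
    have hxyn' := hxy (n + 1) le_rfl
    rw [chainHom, chainHom, Category.assoc, shortHom_comp_shortHom hY hσ hr (by linarith),
      ← shortHom_comp_shortHom hY hσ hr (y := y n) (by linarith), ← Category.assoc,
      ih (fun i hi => hx i (by omega)) (fun i hi => hy i (by omega))
        (fun i hi => hxy i (by omega)), Category.assoc]

theorem chainHom_eq_toHom_subpath (hr : BallLoopsNullhomotopic Y r) (hδ : δ + σ < r) {a b : Y}
    (η : Path a b) (t : ℕ → unitInterval) {n : ℕ}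
    (hη : ∀ i < n, ∀ s ∈ uIcc (t i) (t (i + 1)), dist (η (t i)) (η s) ≤ δ) :
    chainHom hY hσ (fun i => η (t i)) n = (η.subpath (t 0) (t n)).toHom := by
  induction n with
  | zero => rw [Path.subpath_self]; rfl
  | succ n ih =>
    have hpiece :
        shortHom hY hσ (η (t n)) (η (t (n + 1))) = (η.subpath (t n) (t (n + 1))).toHom := by
      refine Path.toHom_eq_of_forall_mem_ball hr (c := η (t n))
        (shortPath_mem_ball hY hσ ?_) fun s => ?_
      · linarith [dist_self (η (t n)), hη n (by omega) _ right_mem_uIcc]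
      · obtain ⟨u, hu, hus⟩ := (Path.range_subpath η _ _).le (Set.mem_range_self s)
        rw [mem_ball, dist_comm, ← hus]
        linarith [hη n (by omega) u hu, hσ]
    rw [chainHom, ih (fun i hi => hη i (by omega)), hpiece, ← Path.toHom_trans]
    exact Quotient.sound ⟨Path.Homotopy.subpathTransSubpath η _ _ _⟩

end Chains

section ClosedChains

variable {Y : Type} [MetricSpace Y] (hY : IsLengthSpace Y) {σ : ℝ} (hσ : 0 < σ)

def chainHomBetween (a b : Y) (x : ℕ → Y) (n : ℕ) :
    FundamentalGroupoid.mk a ⟶ FundamentalGroupoid.mk b :=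
  shortHom hY hσ a (x 0) ≫ chainHom hY hσ x n ≫ shortHom hY hσ (x n) b

theorem chainHomBetween_succ (a b : Y) (x : ℕ → Y) (n : ℕ) :
    chainHomBetween hY hσ a b x (n + 1) =
      chainHomBetween hY hσ a (x (n + 1)) x n ≫ shortHom hY hσ (x (n + 1)) b := by
  simp only [chainHomBetween, chainHom, Category.assoc]

theorem chainHomBetween_congr {a b : Y} {x y : ℕ → Y} {n : ℕ} (h : ∀ i ≤ n, x i = y i) :
    chainHomBetween hY hσ a b x n = chainHomBetween hY hσ a b y n := by
  induction n generalizing b with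
  | zero =>
    simp only [chainHomBetween, chainHom]
    rw [h 0 le_rfl]
  | succ n ih =>
    rw [chainHomBetween_succ, chainHomBetween_succ, h (n + 1) le_rfl,
      ih fun i hi => h i (by omega)]

variable {r δ : ℝ}

theorem chainHomBetween_comp (hr : BallLoopsNullhomotopic Y r) (hσr : σ < r) {a b c : Y}
    (x : ℕ → Y) (n k : ℕ) (hb : x n = b) :
    chainHomBetween hY hσ a b x n ≫ chainHomBetween hY hσ b c (fun i => x (n + i)) k =
      chainHomBetween hY hσ a c x (n + k) := by
  subst hb
  simp only [chainHomBetween, Category.assoc, chainHom_add]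
  change _ ≫ _ ≫ shortHom hY hσ (x n) (x n) ≫ shortHom hY hσ (x n) (x n) ≫ _ = _
  simp [shortHom_self hY hσ hr hσr]

theorem chainHomBetween_mul (hr : BallLoopsNullhomotopic Y r) (hδ : 2 * δ + σ < r)
    {a b : Y} {x : ℕ → Y} {m n : ℕ} (hstep : ∀ i < m * n, dist (x i) (x (i + 1)) ≤ δ)
    (hblock : ∀ i < n, ∀ j ≤ m, dist (x (m * i)) (x (m * i + j)) ≤ δ) :
    chainHomBetween hY hσ a b x (m * n) = chainHomBetween hY hσ a b (fun i => x (m * i)) n := by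
  rw [chainHomBetween, chainHom_mul hY hσ hr hδ hstep hblock]
  rfl

theorem chainHomBetween_eq_of_dist_le (hr : BallLoopsNullhomotopic Y r) (hδ : 2 * δ + σ < r)
    {a b : Y} {x y : ℕ → Y} {n : ℕ} (hx : ∀ i < n, dist (x i) (x (i + 1)) ≤ δ)
    (hy : ∀ i < n, dist (y i) (y (i + 1)) ≤ δ) (hxy : ∀ i ≤ n, dist (x i) (y i) ≤ δ)
    (ha : dist a (x 0) ≤ δ) (hb : dist (y n) b ≤ δ) :
    chainHomBetween hY hσ a b x n = chainHomBetween hY hσ a b y n := by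
  have h0 := hxy 0 (Nat.zero_le _)
  have hn := hxy n le_rfl
  calc chainHomBetween hY hσ a b x n
      = shortHom hY hσ a (x 0) ≫ chainHom hY hσ x n ≫ shortHom hY hσ (x n) (y n) ≫
          shortHom hY hσ (y n) b := by
        rw [chainHomBetween, shortHom_comp_shortHom hY hσ hr (by linarith)]
    _ = shortHom hY hσ a (x 0) ≫ shortHom hY hσ (x 0) (y 0) ≫ chainHom hY hσ y n ≫
          shortHom hY hσ (y n) b := by
        rw [reassoc_of% chainHom_comp_shortHom hY hσ hr hδ hx hy hxy]
    _ = chainHomBetween hY hσ a b y n := by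
        rw [reassoc_of% shortHom_comp_shortHom hY hσ hr (by linarith)]
        rfl

theorem chainHomBetween_eq_shortHom (hr : BallLoopsNullhomotopic Y r) (hδ : 2 * δ + σ < r)
    {a b : Y} {x : ℕ → Y} {n : ℕ} (h0 : x 0 = a) (hn : x n = b)
    (hstep : ∀ i < n, dist (x i) (x (i + 1)) ≤ δ) (hball : ∀ i ≤ n, dist (x 0) (x i) ≤ δ) :
    chainHomBetween hY hσ a b x n = shortHom hY hσ a b := by
  subst h0 hn
  have hσr : σ < r := by linarith [hball 0 (Nat.zero_le _), dist_self (x 0)]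
  simp [chainHomBetween, chainHom_eq_shortHom hY hσ hr hδ hstep hball,
    shortHom_self hY hσ hr hσr]

theorem chainHomBetween_eq_toHom (hr : BallLoopsNullhomotopic Y r) (hδ : δ + σ < r) {a b : Y}
    (η : Path a b) {t : ℕ → unitInterval} {n : ℕ} (h0 : t 0 = 0) (hn : t n = 1)
    (hη : ∀ i < n, ∀ s ∈ uIcc (t i) (t (i + 1)), dist (η (t i)) (η s) ≤ δ) :
    chainHomBetween hY hσ a b (fun i => η (t i)) n = η.toHom := by
  have hn0 : 0 < n := Nat.pos_of_ne_zero fun h => by subst h; exact zero_ne_one (h0.symm.trans hn)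
  have hσr : σ < r := by linarith [dist_nonneg.trans (hη 0 hn0 _ left_mem_uIcc)]
  have hcast : ∀ {a' b'} (ha : a' = a) (hb : b' = b),
      shortHom hY hσ a a' ≫ (η.cast ha hb).toHom ≫ shortHom hY hσ b' b = η.toHom := by
    rintro _ _ rfl rfl
    simp [shortHom_self hY hσ hr hσr]
  rw [chainHomBetween, chainHom_eq_toHom_subpath hY hσ hr hδ η t hη]
  rw [h0, hn, Path.subpath_zero_one]
  exact hcast _ _

end ClosedChains

theorem unitInterval.dist_le_of_mem_uIcc {a b s : unitInterval} (hs : s ∈ uIcc a b) :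
    dist a s ≤ dist a b := by
  have hs' : (s : ℝ) ∈ uIcc (a : ℝ) b := by
    rw [Set.mem_uIcc] at hs ⊢
    exact_mod_cast hs
  simpa only [Subtype.dist_eq] using Real.dist_left_le_of_mem_uIcc hs'

/-- `i / n`, clamped to `1` for `i > n`; note that `gridPoint 0 i = 0`. -/
def gridPoint (n i : ℕ) : unitInterval :=
  Set.projIcc 0 1 zero_le_one ((i : ℝ) / n)

theorem gridPoint_zero (n : ℕ) : gridPoint n 0 = 0 := by
  simp [gridPoint]

theorem gridPoint_self {n : ℕ} (hn : n ≠ 0) : gridPoint n n = 1 := by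
  simp [gridPoint, hn]

theorem gridPoint_mul {m : ℕ} (hm : m ≠ 0) (n i : ℕ) :
    gridPoint (m * n) (m * i) = gridPoint n i := by
  simp only [gridPoint, Nat.cast_mul]
  rw [mul_div_mul_left _ _ (Nat.cast_ne_zero.mpr hm)]

theorem dist_gridPoint_le (n i j : ℕ) :
    dist (gridPoint n i) (gridPoint n j) ≤ |(i : ℝ) - j| / n := by
  refine ((LipschitzWith.projIcc zero_le_one).dist_le_mul _ _).trans_eq ?_
  rw [NNReal.coe_one, one_mul, Real.dist_eq, ← sub_div, abs_div, Nat.abs_cast]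

theorem dist_gridPoint_succ_le (n i : ℕ) : dist (gridPoint n i) (gridPoint n (i + 1)) ≤ 1 / n := by
  simpa using dist_gridPoint_le n i (i + 1)

theorem dist_gridPoint_mul_le {m j : ℕ} (hj : j ≤ m) (n i : ℕ) :
    dist (gridPoint (m * n) (m * i)) (gridPoint (m * n) (m * i + j)) ≤ 1 / n := by
  refine (dist_gridPoint_le _ _ _).trans ?_
  rw [Nat.cast_add, sub_add_cancel_left, abs_neg, Nat.abs_cast]
  rcases Nat.eq_zero_or_pos n with rfl | hn
  · simp
  rcases Nat.eq_zero_or_pos m with rfl | hm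
  · simp [Nat.le_zero.mp hj]
  rw [div_le_div_iff₀ (by positivity) (by positivity)]
  push_cast
  have : (j : ℝ) ≤ m := by exact_mod_cast hj
  nlinarith

theorem Path.apply_gridPoint {X : Type} [TopologicalSpace X] {a b : X} (γ : Path a b)
    (n i : ℕ) : γ (gridPoint n i) = γ.extend (i / n) :=
  rfl

theorem Path.trans_gridPoint_left {X : Type} [TopologicalSpace X] {a b c : X} (γ : Path a b)
    (γ' : Path b c) {n i : ℕ} (hi : i ≤ n) :
    (γ.trans γ') (gridPoint (2 * n) i) = γ (gridPoint n i) := by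
  rw [Path.apply_gridPoint, Path.apply_gridPoint, Path.extend_trans_of_le_half]
  · congr 1
    push_cast
    ring
  · rcases Nat.eq_zero_or_pos n with rfl | hn
    · simp
    rw [div_le_iff₀ (by positivity)]
    push_cast
    have : (i : ℝ) ≤ n := by exact_mod_cast hi
    linarith

theorem Path.trans_gridPoint_right {X : Type} [TopologicalSpace X] {a b c : X} (γ : Path a b)
    (γ' : Path b c) {n : ℕ} (hn : n ≠ 0) (i : ℕ) :
    (γ.trans γ') (gridPoint (2 * n) (n + i)) = γ' (gridPoint n i) := by
  have hn' : (0 : ℝ) < n := by positivity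
  rw [Path.apply_gridPoint, Path.apply_gridPoint, Path.extend_trans_of_half_le]
  · congr 1
    push_cast
    field_simp
    ring
  · rw [le_div_iff₀ (by positivity)]
    push_cast
    linarith [(Nat.cast_nonneg i : (0 : ℝ) ≤ i)]

section Push

variable {X : Type} [MetricSpace X]

def Path.IsFine {a b : X} (γ : Path a b) (θ : ℝ) (n : ℕ) : Prop :=
  ∀ s t, dist s t ≤ 1 / n → dist (γ s) (γ t) ≤ θ

theorem Path.IsFine.mul {a b : X} {γ : Path a b} {θ : ℝ} {n : ℕ} (hγ : γ.IsFine θ n) {m : ℕ}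
    (hm : m ≠ 0) : γ.IsFine θ (m * n) := by
  refine fun s t hst => hγ s t (hst.trans ?_)
  rw [Nat.cast_mul, ← div_div]
  exact div_le_div_of_nonneg_right
    (div_le_self zero_le_one (by exact_mod_cast Nat.one_le_iff_ne_zero.mpr hm)) n.cast_nonneg

theorem Path.exists_isFine {a b : X} (γ : Path a b) {θ : ℝ} (hθ : 0 < θ) :
    ∃ n, n ≠ 0 ∧ γ.IsFine θ n :=
  (CompactSpace.uniformContinuous_of_continuous γ.continuous).exists_nat_dist_le hθ

variable {Y : Type} [MetricSpace Y] (hY : IsLengthSpace Y) {σ : ℝ} (hσ : 0 < σ) (f : X → Y)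

def pushHom {a b : X} (γ : Path a b) (n : ℕ) :
    FundamentalGroupoid.mk (f a) ⟶ FundamentalGroupoid.mk (f b) :=
  chainHomBetween hY hσ (f a) (f b) (fun i => f (γ (gridPoint n i))) n

variable {r ε θ : ℝ} {f}

theorem pushHom_trans (hr : BallLoopsNullhomotopic Y r) (hσr : σ < r) {a b c : X}
    (γ : Path a b) (γ' : Path b c) {n : ℕ} (hn : n ≠ 0) :
    pushHom hY hσ f (γ.trans γ') (2 * n) = pushHom hY hσ f γ n ≫ pushHom hY hσ f γ' n := by
  have key := chainHomBetween_comp hY hσ hr hσr (a := f a) (b := f b) (c := f c)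
    (fun i => f ((γ.trans γ') (gridPoint (2 * n) i))) n n
    (by simp only [Path.trans_gridPoint_left _ _ le_rfl, gridPoint_self hn, Path.target])
  rw [← two_mul] at key
  rw [pushHom, ← key]
  congr 1
  · exact chainHomBetween_congr hY hσ fun i hi => by rw [Path.trans_gridPoint_left _ _ hi]
  · exact chainHomBetween_congr hY hσ fun i _ => by rw [Path.trans_gridPoint_right _ _ hn]

variable (hf : ∀ u v, dist (f u) (f v) ≤ dist u v + ε)
include hf

theorem Path.IsFine.dist_map_le {a b : X} {γ : Path a b} {n : ℕ} (hγ : γ.IsFine θ n) {s t}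
    (hst : dist s t ≤ 1 / n) : dist (f (γ s)) (f (γ t)) ≤ θ + ε := by
  linarith [hf (γ s) (γ t), hγ s t hst]

theorem pushHom_mul (hr : BallLoopsNullhomotopic Y r) (hθε : 2 * (θ + ε) + σ < r) {a b : X}
    {γ : Path a b} {n : ℕ} (hγ : γ.IsFine θ n) {m : ℕ} (hm : m ≠ 0) :
    pushHom hY hσ f γ (m * n) = pushHom hY hσ f γ n := by
  rw [pushHom, chainHomBetween_mul hY hσ hr hθε (x := fun i => f (γ (gridPoint (m * n) i)))
    (fun i _ => (hγ.mul hm).dist_map_le hf (dist_gridPoint_succ_le _ _))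
    (fun i _ j hj => hγ.dist_map_le hf (dist_gridPoint_mul_le hj _ _))]
  simp only [gridPoint_mul hm]
  rfl

theorem pushHom_eq_of_forall_dist_le (hr : BallLoopsNullhomotopic Y r)
    (hθε : 2 * (θ + ε) + σ < r) {a b : X} {γ γ' : Path a b} {n : ℕ} (hn : n ≠ 0)
    (hγ : γ.IsFine θ n) (hγ' : γ'.IsFine θ n) (hclose : ∀ t, dist (γ t) (γ' t) ≤ θ) :
    pushHom hY hσ f γ n = pushHom hY hσ f γ' n := by
  have hθε0 : 0 ≤ θ + ε := by
    linarith [hf a a, hγ 0 0 (by simp), dist_self a, dist_self (f a), dist_self (γ 0)]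
  refine chainHomBetween_eq_of_dist_le hY hσ hr hθε
    (fun i _ => hγ.dist_map_le hf (dist_gridPoint_succ_le _ _))
    (fun i _ => hγ'.dist_map_le hf (dist_gridPoint_succ_le _ _))
    (fun i _ => by linarith [hf (γ (gridPoint n i)) (γ' (gridPoint n i)), hclose (gridPoint n i)])
    ?_ ?_
  · simpa [gridPoint_zero] using hθε0
  · simpa [gridPoint_self hn] using hθε0

theorem pushHom_eq_of_homotopic (hr : BallLoopsNullhomotopic Y r) (hθ : 0 < θ)
    (hθε : 2 * (θ + ε) + σ < r) {a b : X} {γ γ' : Path a b} (h : γ.Homotopic γ') {n n' : ℕ}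
    (hn : n ≠ 0) (hn' : n' ≠ 0) (hγ : γ.IsFine θ n) (hγ' : γ'.IsFine θ n') :
    pushHom hY hσ f γ n = pushHom hY hσ f γ' n' := by
  obtain ⟨F⟩ := h
  obtain ⟨M, hM, hFM⟩ :=
    (CompactSpace.uniformContinuous_of_continuous F.continuous).exists_nat_dist_le hθ
  -- Slice the homotopy into the paths `F.eval (j / M)`; consecutive slices are `θ`-close.
  have hfine : ∀ j, (F.eval (gridPoint M j)).IsFine θ M := fun j s t hst =>
    hFM _ _ (by simpa [Prod.dist_eq] using hst)
  have hclose : ∀ j t, dist (F.eval (gridPoint M j) t) (F.eval (gridPoint M (j + 1)) t) ≤ θ :=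
    fun j t => hFM _ _ (by simpa [Prod.dist_eq] using dist_gridPoint_succ_le M j)
  set K := n * n' * M
  have hK : K ≠ 0 := by positivity
  have hstage : ∀ j, pushHom hY hσ f (F.eval (gridPoint M j)) K = pushHom hY hσ f γ K := by
    intro j
    induction j with
    | zero => rw [gridPoint_zero, F.eval_zero]
    | succ j ih =>
      rw [← ih, pushHom_eq_of_forall_dist_le hY hσ hf hr hθε hK ((hfine _).mul (by positivity))
        ((hfine _).mul (by positivity)) (hclose j)]
  calc pushHom hY hσ f γ n = pushHom hY hσ f γ ((n' * M) * n) :=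
        (pushHom_mul hY hσ hf hr hθε hγ (by positivity)).symm
    _ = pushHom hY hσ f γ K := by rw [show n' * M * n = K by ring]
    _ = pushHom hY hσ f γ' K := by rw [← hstage M, gridPoint_self hM, F.eval_one]
    _ = pushHom hY hσ f γ' ((n * M) * n') := by rw [show n * M * n' = K by ring]
    _ = pushHom hY hσ f γ' n' := pushHom_mul hY hσ hf hr hθε hγ' (by positivity)

theorem pushHom_eq_shortHom (hr : BallLoopsNullhomotopic Y r) {ρ : ℝ}
    (hρ : 2 * (ρ + θ + ε) + σ < r) {a b : X} {γ : Path a b} {n : ℕ} (hn : n ≠ 0)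
    (hγ : γ.IsFine θ n) (hγρ : ∀ t, dist a (γ t) ≤ ρ) :
    pushHom hY hσ f γ n = shortHom hY hσ (f a) (f b) := by
  have hθ : 0 ≤ θ := (dist_nonneg).trans (hγ 0 0 (by simp))
  have hρ0 : 0 ≤ ρ := (dist_nonneg).trans (hγρ 0)
  refine chainHomBetween_eq_shortHom hY hσ hr hρ (by simp [gridPoint_zero])
    (by simp [gridPoint_self hn]) (fun i _ => ?_) (fun i _ => ?_)
  · linarith [hγ.dist_map_le hf (dist_gridPoint_succ_le n i)]
  · simp only [gridPoint_zero, Path.source]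
    linarith [hf a (γ (gridPoint n i)), hγρ (gridPoint n i)]

end Push

section Functor

variable {X Y : Type} [MetricSpace X] [MetricSpace Y] (hY : IsLengthSpace Y) {r ε : ℝ}
  (hε : 0 < ε) (hr : BallLoopsNullhomotopic Y r) (hεr : 5 * ε < r) {f : X → Y}
  (hf : ∀ u v, dist (f u) (f v) ≤ dist u v + ε)

def Path.fineMesh {a b : X} (γ : Path a b) {θ : ℝ} (hθ : 0 < θ) : ℕ :=
  (γ.exists_isFine hθ).choose

theorem Path.fineMesh_ne_zero {a b : X} (γ : Path a b) {θ : ℝ} (hθ : 0 < θ) :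
    γ.fineMesh hθ ≠ 0 :=
  (γ.exists_isFine hθ).choose_spec.1

theorem Path.isFine_fineMesh {a b : X} (γ : Path a b) {θ : ℝ} (hθ : 0 < θ) :
    γ.IsFine θ (γ.fineMesh hθ) :=
  (γ.exists_isFine hθ).choose_spec.2

include hr hεr hf in
theorem pushHom_fineMesh_trans {a b c : X} (γ : Path a b) (γ' : Path b c) :
    pushHom hY hε f (γ.trans γ') ((γ.trans γ').fineMesh hε) =
      pushHom hY hε f γ (γ.fineMesh hε) ≫ pushHom hY hε f γ' (γ'.fineMesh hε) := by
  have hθε : 2 * (ε + ε) + ε < r := by linarith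
  set M := (γ.trans γ').fineMesh hε
  set n := γ.fineMesh hε
  set n' := γ'.fineMesh hε
  have hM := (γ.trans γ').fineMesh_ne_zero hε
  have hn := γ.fineMesh_ne_zero hε
  have hn' := γ'.fineMesh_ne_zero hε
  -- `γ.trans γ'` need not be fine at `2 * n`, so all three meshes are refined to a common one.
  calc pushHom hY hε f (γ.trans γ') M
      = pushHom hY hε f (γ.trans γ') (2 * (n * n') * M) :=
        (pushHom_mul hY hε hf hr hθε ((γ.trans γ').isFine_fineMesh hε) (by positivity)).symm
    _ = pushHom hY hε f γ (n * n' * M) ≫ pushHom hY hε f γ' (n * n' * M) := by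
        rw [mul_assoc, pushHom_trans hY hε hr (by linarith) _ _ (by positivity)]
    _ = pushHom hY hε f γ n ≫ pushHom hY hε f γ' n' := by
        rw [show n * n' * M = (n' * M) * n by ring,
          pushHom_mul hY hε hf hr hθε (γ.isFine_fineMesh hε) (by positivity),
          show n' * M * n = (n * M) * n' by ring,
          pushHom_mul hY hε hf hr hθε (γ'.isFine_fineMesh hε) (by positivity)]

def pushFunctor : FundamentalGroupoid X ⥤ FundamentalGroupoid Y where
  obj x := .mk (f x.as)
  map {x y} := Quotient.lift (fun γ : Path x.as y.as => pushHom hY hε f γ (γ.fineMesh hε))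
    fun _ _ h => pushHom_eq_of_homotopic hY hε hf hr hε (by linarith) h
      (Path.fineMesh_ne_zero _ hε) (Path.fineMesh_ne_zero _ hε) (Path.isFine_fineMesh _ hε)
      (Path.isFine_fineMesh _ hε)
  map_id x :=
    (pushHom_eq_shortHom hY hε hf hr (ρ := 0) (by linarith) (Path.fineMesh_ne_zero _ hε)
      (Path.isFine_fineMesh _ hε) (by simp)).trans (shortHom_self hY hε hr (by linarith) _)
  map_comp := by
    rintro x y z ⟨γ⟩ ⟨γ'⟩
    exact pushHom_fineMesh_trans hY hε hr hεr hf γ γ'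

theorem pushFunctor_map_shortPath (hX : IsLengthSpace X) {D : ℝ} (hD : 2 * D + 7 * ε < r)
    {u v : X} (huv : dist u v ≤ D) :
    (pushFunctor hY hε hr hεr hf).map (shortPath hX hε u v).toHom =
      shortHom hY hε (f u) (f v) :=
  pushHom_eq_shortHom hY hε hf hr (ρ := D + ε) (by linarith) (Path.fineMesh_ne_zero _ hε)
    (Path.isFine_fineMesh _ hε) fun t => (dist_shortPath_le hX hε u v t).trans (by linarith)

theorem exists_pushFunctor_map_eq_chainHomBetween (hX : IsLengthSpace X) {D : ℝ}
    (hD : 2 * D + 7 * ε < r) {x : ℕ → X} {a b : X} {n : ℕ} (ha : dist a (x 0) ≤ D)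
    (hx : ∀ i < n, dist (x i) (x (i + 1)) ≤ D) (hb : dist (x n) b ≤ D) :
    ∃ u : FundamentalGroupoid.mk a ⟶ FundamentalGroupoid.mk b,
      (pushFunctor hY hε hr hεr hf).map u =
        chainHomBetween hY hε (f a) (f b) (fun i => f (x i)) n := by
  induction n generalizing b with
  | zero =>
    refine ⟨(shortPath hX hε a (x 0)).toHom ≫ (shortPath hX hε (x 0) b).toHom, ?_⟩
    rw [Functor.map_comp, pushFunctor_map_shortPath hY hε hr hεr hf hX hD ha,
      pushFunctor_map_shortPath hY hε hr hεr hf hX hD hb]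
    simp only [chainHomBetween, chainHom, Category.id_comp]
    rfl
  | succ n ih =>
    obtain ⟨u, hu⟩ := ih (fun i hi => hx i (by omega)) (hx n (by omega))
    refine ⟨u ≫ (shortPath hX hε (x (n + 1)) b).toHom, ?_⟩
    rw [Functor.map_comp, hu, pushFunctor_map_shortPath hY hε hr hεr hf hX hD hb,
      chainHomBetween_succ]
    rfl

end Functor

structure IsApproxInverse {X Y : Type} [MetricSpace X] [MetricSpace Y] (f : X → Y) (g : Y → X)
    (ε : ℝ) : Prop where
  dist_map_le : ∀ u v, dist (f u) (f v) ≤ dist u v + ε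
  dist_inv_le : ∀ u v, dist (g u) (g v) ≤ dist u v + ε
  dist_map_inv : ∀ y, dist y (f (g y)) ≤ ε
  dist_inv_map : ∀ x, dist x (g (f x)) ≤ ε

theorem pushFunctor_map_surjective {X Y : Type} [MetricSpace X] [MetricSpace Y]
    (hX : IsLengthSpace X) (hY : IsLengthSpace Y) {r ε : ℝ} (hε : 0 < ε)
    (hr : BallLoopsNullhomotopic Y r) (hεr : 10 * ε ≤ r) {f : X → Y} {g : Y → X}
    (hfg : IsApproxInverse f g ε) (a b : X) :
    Function.Surjective ((pushFunctor hY hε hr (by linarith) hfg.dist_map_le).map :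
      (FundamentalGroupoid.mk a ⟶ FundamentalGroupoid.mk b) → _) := by
  refine Quotient.ind fun η : Path (f a) (f b) => ?_
  obtain ⟨N, hN, hηN⟩ := η.exists_isFine (θ := ε / 4) (by positivity)
  have hstep : ∀ i < N, dist (η (gridPoint N i)) (η (gridPoint N (i + 1))) ≤ ε / 4 :=
    fun i _ => hηN _ _ (dist_gridPoint_succ_le N i)
  have hη : chainHomBetween hY hε (f a) (f b) (fun i => η (gridPoint N i)) N = η.toHom :=
    chainHomBetween_eq_toHom hY hε hr (by linarith) η (gridPoint_zero N) (gridPoint_self hN)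
      fun i _ s hs => hηN _ _ ((unitInterval.dist_le_of_mem_uIcc hs).trans
        (dist_gridPoint_succ_le N i))
  have hladder : chainHomBetween hY hε (f a) (f b) (fun i => η (gridPoint N i)) N =
      chainHomBetween hY hε (f a) (f b) (fun i => f (g (η (gridPoint N i)))) N := by
    refine chainHomBetween_eq_of_dist_le hY hε hr (δ := ε / 4 + 2 * ε) (by linarith)
      (fun i hi => by linarith [hstep i hi]) (fun i hi => ?_)
      (fun i _ => by linarith [hfg.dist_map_inv (η (gridPoint N i))]) ?_ ?_
    · linarith [hstep i hi, hfg.dist_map_le (g (η (gridPoint N i))) (g (η (gridPoint N (i + 1)))),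
        hfg.dist_inv_le (η (gridPoint N i)) (η (gridPoint N (i + 1)))]
    · simp only [gridPoint_zero, Path.source, dist_self]
      positivity
    · rw [gridPoint_self hN, Path.target, dist_comm]
      linarith [hfg.dist_map_inv (f b)]
  have ha : dist a (g (η (gridPoint N 0))) ≤ ε / 4 + ε := by
    rw [gridPoint_zero, Path.source]
    linarith [hfg.dist_inv_map a]
  have hb : dist (g (η (gridPoint N N))) b ≤ ε / 4 + ε := by
    rw [gridPoint_self hN, Path.target, dist_comm]
    linarith [hfg.dist_inv_map b]
  obtain ⟨u, hu⟩ := exists_pushFunctor_map_eq_chainHomBetween hY hε hr (by linarith)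
    hfg.dist_map_le hX (D := ε / 4 + ε) (x := fun i => g (η (gridPoint N i))) (by linarith) ha
    (fun i hi => by
      linarith [hstep i hi, hfg.dist_inv_le (η (gridPoint N i)) (η (gridPoint N (i + 1)))])
    hb
  exact ⟨u, hu.trans (hladder.symm.trans hη)⟩

theorem IsCompact.exists_dist_le_of_hausdorffDist_le {Z : Type*} [MetricSpace Z] {s t : Set Z}
    (ht : IsCompact t) (hfin : hausdorffEDist s t ≠ ⊤) {e : ℝ} (h : hausdorffDist s t ≤ e)
    {z : Z} (hz : z ∈ s) : ∃ w ∈ t, dist z w ≤ e := by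
  have htne : t.Nonempty := nonempty_of_hausdorffEDist_ne_top ⟨z, hz⟩ hfin
  obtain ⟨w, hw, hzw⟩ := ht.exists_infDist_eq_dist htne z
  exact ⟨w, hw, hzw ▸ (infDist_le_hausdorffDist_of_mem hz hfin).trans h⟩

theorem exists_isApproxInverse_of_ghDist_le {X Y : Type} [MetricSpace X] [CompactSpace X]
    [Nonempty X] [MetricSpace Y] [CompactSpace Y] [Nonempty Y] {e : ℝ}
    (h : GromovHausdorff.ghDist X Y ≤ e) :
    ∃ (f : X → Y) (g : Y → X), IsApproxInverse f g (2 * e) := by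
  set ι₁ := GromovHausdorff.optimalGHInjl X Y
  set ι₂ := GromovHausdorff.optimalGHInjr X Y
  have hι₁ : Isometry ι₁ := GromovHausdorff.isometry_optimalGHInjl X Y
  have hι₂ : Isometry ι₂ := GromovHausdorff.isometry_optimalGHInjr X Y
  have hc₁ := isCompact_range hι₁.continuous
  have hc₂ := isCompact_range hι₂.continuous
  have hfin : hausdorffEDist (range ι₁) (range ι₂) ≠ ⊤ :=
    hausdorffEDist_ne_top_of_nonempty_of_bounded (range_nonempty _) (range_nonempty _)
      hc₁.isBounded hc₂.isBounded
  have hHD : hausdorffDist (range ι₁) (range ι₂) ≤ e :=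
    (GromovHausdorff.hausdorffDist_optimal).trans_le h
  have hf : ∀ x, ∃ y, dist (ι₁ x) (ι₂ y) ≤ e := fun x => by
    obtain ⟨_, ⟨y, rfl⟩, hy⟩ := hc₂.exists_dist_le_of_hausdorffDist_le hfin hHD (mem_range_self x)
    exact ⟨y, hy⟩
  have hg : ∀ y, ∃ x, dist (ι₁ x) (ι₂ y) ≤ e := fun y => by
    rw [hausdorffEDist_comm] at hfin
    rw [hausdorffDist_comm] at hHD
    obtain ⟨_, ⟨x, rfl⟩, hx⟩ := hc₁.exists_dist_le_of_hausdorffDist_le hfin hHD (mem_range_self y)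
    exact ⟨x, dist_comm (ι₁ x) _ ▸ hx⟩
  choose f hf using hf
  choose g hg using hg
  refine ⟨f, g, ⟨fun u v => ?_, fun u v => ?_, fun y => ?_, fun x => ?_⟩⟩
  · rw [← hι₂.dist_eq, ← hι₁.dist_eq]
    linarith [dist_triangle4 (ι₂ (f u)) (ι₁ u) (ι₁ v) (ι₂ (f v)), dist_comm (ι₂ (f u)) (ι₁ u),
      hf u, hf v]
  · rw [← hι₂.dist_eq, ← hι₁.dist_eq]
    linarith [dist_triangle4 (ι₁ (g u)) (ι₂ u) (ι₂ v) (ι₁ (g v)), dist_comm (ι₁ (g v)) (ι₂ v),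
      hg u, hg v]
  · rw [← hι₂.dist_eq]
    linarith [dist_triangle (ι₂ y) (ι₁ (g y)) (ι₂ (f (g y))), dist_comm (ι₂ y) (ι₁ (g y)),
      hg y, hf (g y)]
  · rw [← hι₁.dist_eq]
    linarith [dist_triangle (ι₁ x) (ι₂ (f x)) (ι₁ (g (f x))), dist_comm (ι₂ (f x)) (ι₁ (g (f x))),
      hf x, hg (f x)]

theorem statement3_general (Y₁ Y₂ : Type) [MetricSpace Y₁] [CompactSpace Y₁] [Nonempty Y₁]
    [MetricSpace Y₂] [CompactSpace Y₂] [Nonempty Y₂]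
    (hlen₁ : IsLengthSpace Y₁) (hlen₂ : IsLengthSpace Y₂)
    (r : ℝ) (hr : 0 < r)
    (hrY : ∀ (c z : Y₂) (γ : Path z z), (∀ t, γ t ∈ Metric.ball c r) → loopClass γ = 1)
    (hGH : GromovHausdorff.ghDist Y₁ Y₂ ≤ r / 20)
    (p₁ : Y₁) (p₂ : Y₂) :
    ∃ Φ : FundamentalGroup Y₁ p₁ →* FundamentalGroup Y₂ p₂, Function.Surjective Φ := by
  obtain ⟨f, g, hfg⟩ := exists_isApproxInverse_of_ghDist_le hGH
  have hε : 0 < 2 * (r / 20) := by positivity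
  have hεr : 10 * (2 * (r / 20)) ≤ r := by linarith
  let Φ := pushFunctor hlen₂ hε hrY (by linarith) hfg.dist_map_le
  have := hlen₂.pathConnectedSpace
  let e := FundamentalGroup.fundamentalGroupMulEquivOfPath (PathConnectedSpace.somePath (f p₁) p₂)
  exact ⟨e.toMonoidHom.comp (Φ.mapEnd _), e.surjective.comp
    (pushFunctor_map_surjective hlen₁ hlen₂ hε hrY hεr hfg p₁ p₁)⟩

/-- **Statement 3** (Sormani–Wei, Theorem 2.1). Let `Y₁, Y₂` be compact length spaces
with `Y₂` semi-locally simply connected, and let `r > 0` be (at most) the semi-locally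
simple connectivity radius `r(Y₂)`, i.e. every loop lying in an open ball of radius `r`
in `Y₂` is null-homotopic in `Y₂`.  If `d_GH(Y₁, Y₂) ≤ r/20` then there is a surjective
homomorphism `Φ : π₁(Y₁) → π₁(Y₂)`. -/
theorem statement3 (Y₁ Y₂ : Type) [MetricSpace Y₁] [CompactSpace Y₁] [Nonempty Y₁]
    [MetricSpace Y₂] [CompactSpace Y₂] [Nonempty Y₂]
    (hlen₁ : IsLengthSpace Y₁) (hlen₂ : IsLengthSpace Y₂)
    (hslsc : SemiLocallySimplyConnected Y₂)
    (r : ℝ) (hr : 0 < r)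
    (hrY : ∀ (c z : Y₂) (γ : Path z z), (∀ t, γ t ∈ Metric.ball c r) → loopClass γ = 1)
    (hGH : GromovHausdorff.ghDist Y₁ Y₂ ≤ r / 20)
    (p₁ : Y₁) (p₂ : Y₂) :
    ∃ Φ : FundamentalGroup Y₁ p₁ →* FundamentalGroup Y₂ p₂, Function.Surjective Φ :=
  statement3_general Y₁ Y₂ hlen₁ hlen₂ r hr hrY hGH p₁ p₂

end
end

section
/- Let Y be a compact length space, p ∈ Y and δ > 0. For every nontrivial element g of the deck transformation group G(Y, δ) of the δ-cover Ỹ^δ, the δ-length of g satisfies l(g, δ) ≥ δ. -/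
open Metric Filter Topology Set

noncomputable section

attribute [local instance] Path.Homotopic.setoid

theorem Path.edist_le_elength {X : Type} [MetricSpace X] {x y : X} (γ : Path x y)
    (s t : unitInterval) : edist (γ s) (γ t) ≤ γ.elength := by
  simpa only [Path.elength, Path.extend_extends'] using
    eVariationOn.edist_le (fun t : ℝ => γ.extend t) s.2 t.2

theorem IsLengthSpace.exists_path_elength_lt {X : Type} [MetricSpace X]
    (hX : IsLengthSpace X) {x y : X} {r : ℝ} (hxy : dist x y < r) :
    ∃ γ : Path x y, γ.elength < ENNReal.ofReal r := by
  rw [← iInf_lt_iff, ← hX x y]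
  exact edist_lt_ofReal.mpr hxy

theorem loopClass_mem_piDelta {Y : Type} [MetricSpace Y] {δ : ℝ} {q c : Y} (β : Path q q)
    (hβ : ∀ t, β t ∈ ball c δ) : loopClass β ∈ piDelta Y δ q := by
  refine Subgroup.subset_normalClosure ⟨q, c, β, Path.refl q, hβ, ?_⟩
  unfold loopClass
  rw [Path.refl_symm]
  exact congrArg _ (Quotient.sound
    (Path.Homotopic.trans ⟨Path.Homotopy.transRefl _⟩ ⟨Path.Homotopy.reflTrans β⟩).symm)

theorem Deck.eq_one_of_apply_eq {E X : Type} [TopologicalSpace E] [TopologicalSpace X]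
    [PreconnectedSpace E] {π : E → X} (hπ : IsCoveringMap π) {h : Equiv.Perm E}
    (hh : h ∈ Deck π) {q : E} (hq : h q = q) : h = 1 :=
  Equiv.ext (congrFun (hπ.eq_of_comp_eq hh.1 continuous_id (funext hh.2.2) q hq))

/-- A short path between two points of a fiber projects to a loop inside a `δ`-ball, and
such loops lift to closed loops. -/
theorem IsDeltaCover.eq_of_map_eq_of_dist_lt {E Y : Type} [MetricSpace E] [MetricSpace Y]
    {π : E → Y} {δ : ℝ} (hC : IsDeltaCover π δ) {q q' : E} (hfib : π q' = π q)
    (hd : dist q q' < δ) : q' = q := by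
  obtain ⟨γ, hγ⟩ := hC.length.exists_path_elength_lt hd
  let β : Path (π q) (π q) := (γ.map hC.covering.continuous).cast rfl hfib.symm
  have hβ : ∀ t, β t ∈ ball (π q) δ := fun t => by
    rw [mem_ball']
    calc dist (π q) (β t) ≤ dist q (γ t) := by simpa [β] using hC.nonexpanding q (γ t)
      _ < δ := by
        rw [← edist_lt_ofReal]
        simpa using (γ.edist_le_elength 0 t).trans_lt hγ
  have hclosed := (hC.lifted_loops (π q) β q γ.toContinuousMap rfl (fun _ => rfl)
    γ.source).mpr (loopClass_mem_piDelta β hβ)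
  simpa using hclosed

theorem statement7_general (Y : Type) [MetricSpace Y] (δ : ℝ)
    (C : MCov Y) (hC : IsDeltaCover C.π δ)
    (h : Equiv.Perm C.E) (hmem : h ∈ Deck C.π) (hne : h ≠ 1) :
    δ ≤ ⨅ q : C.E, dist q (h q) := by
  have := hC.conn
  refine le_ciInf fun q => not_lt.mp fun hq => hne ?_
  exact Deck.eq_one_of_apply_eq hC.covering hmem (hC.eq_of_map_eq_of_dist_lt (hmem.2.2 q) hq)

/-- **Statement 7** (Sormani–Wei, Lemma 3.4, first part). For a compact length space `Y`
and `δ > 0`, every nontrivial deck transformation `h` of the `δ`-cover `Ỹ^δ` has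
`δ`-length `l(h, δ) = inf_q d(q, h q) ≥ δ`. -/
theorem statement7 (Y : Type) [MetricSpace Y] [CompactSpace Y] [Nonempty Y]
    (hY : IsLengthSpace Y) (δ : ℝ) (hδ : 0 < δ)
    (C : MCov Y) (hC : IsDeltaCover C.π δ)
    (h : Equiv.Perm C.E) (hmem : h ∈ Deck C.π) (hne : h ≠ 1) :
    δ ≤ ⨅ q : C.E, dist q (h q) :=
  statement7_general Y δ C hC h hmem hne

end
end
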